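/- Define f : ℝ → ℝ by f(t) = ∫₀ᵗ √(cosh s) ds. Let A, B, C, D, E, F ∈ ℝ and A′, B′, C′, D′, E′, F′ ∈ ℝ, define p₁, p₂, p₃ : ℝ → ℂ by p₁(t) = A tanh t + B(f(t) tanh t − 2√(cosh t)) − i D f(t)/cosh t + i E/√(cosh t), p₂(t) = A sech t + B f(t) sech t + C √(cosh t) + i D(cosh t − f(t) sinh t/(2√(cosh t))) + i E sinh t/(2√(cosh t)) + i F/√(cosh t), p₃(t) = A sech t + B f(t) sech t − C √(cosh t) + i D(cosh t − f(t) sinh t/(2√(cosh t))) + i E sinh t/(2√(cosh t)) − i F/√(cosh t), and define q₁, q₂, q₃ by the same formulas with A′,…,F′ in place of A,…,F. Set z₁ = (tanh t, 0, 0), z₂ = (0, sech t, 0), z₃ = (0, 0, sech t), z₄ = (p₁, p₂, q₃), z₅ = (q₁, −q₂, p₃), as maps ℝ → ℂ³. Then the constraints ω(z₂,z₃) = ω(z₁,z₃) = ω(z₁,z₂) = 0, ω(z₁,z₅) + ω(z₂,z₅) − ω(z₃,z₄) = 0, −ω(z₁,z₄) + ω(z₂,z₄) + ω(z₃,z₅)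 = 0, ω(z₄,z₅) = 0 hold (for all t ∈ ℝ) if and only if D = D′ = 0 and A D′ + B E′ + C F′ = A′ D + B′ E + C′ F. -/

import Mathlib

/-!
Evaluating at `t = 0`, where `f 0 = 0`, `tanh 0 = 0` and `cosh 0 = 1`, the two mixed constraints
read `-2 D' = 0` and `2 D = 0`. Once `D = D' = 0`, the imaginary parts of `p₁, p₂, p₃` satisfy
`tanh t · Im p₁ = sech t · (Im p₂ + Im p₃)` for every `t`, so both mixed constraints hold identically,
and `ω(z₄, z₅)` is the constant `2 (B' E + C' F - B E' - C F')`, which vanishes exactly when the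
bilinear relation holds.
-/

noncomputable section

open Complex ComplexConjugate

/-- ℂ³ as triples of complex numbers. -/
abbrev C3 := ℂ × ℂ × ℂ

/-- The standard Kähler form ω(u,v) = Σ Im(conj(u_j)·v_j). -/
def omega3 (u v : C3) : ℝ :=
  (conj u.1 * v.1).im + (conj u.2.1 * v.2.1).im + (conj u.2.2 * v.2.2).im

/-- f(t) = ∫₀ᵗ √(cosh s) ds. -/
def fInt (t : ℝ) : ℝ := ∫ s in (0:ℝ)..t, Real.sqrt (Real.cosh s)

/-- The solution p₁ with parameters A,B,D,E. -/
def sol1 (A B D E : ℝ) (t : ℝ) : ℂ :=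
  ((A * Real.tanh t + B * (fInt t * Real.tanh t - 2 * Real.sqrt (Real.cosh t)) : ℝ) : ℂ)
  + Complex.I * ((-(D * fInt t / Real.cosh t) + E / Real.sqrt (Real.cosh t) : ℝ) : ℂ)

/-- The solution p₂ with parameters A,B,C,D,E,F. -/
def sol2 (A B C D E F : ℝ) (t : ℝ) : ℂ :=
  ((A / Real.cosh t + B * fInt t / Real.cosh t + C * Real.sqrt (Real.cosh t) : ℝ) : ℂ)
  + Complex.I * ((D * (Real.cosh t - fInt t * Real.sinh t / (2 * Real.sqrt (Real.cosh t)))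
      + E * Real.sinh t / (2 * Real.sqrt (Real.cosh t))
      + F / Real.sqrt (Real.cosh t) : ℝ) : ℂ)

/-- The solution p₃ with parameters A,B,C,D,E,F. -/
def sol3 (A B C D E F : ℝ) (t : ℝ) : ℂ :=
  ((A / Real.cosh t + B * fInt t / Real.cosh t - C * Real.sqrt (Real.cosh t) : ℝ) : ℂ)
  + Complex.I * ((D * (Real.cosh t - fInt t * Real.sinh t / (2 * Real.sqrt (Real.cosh t)))
      + E * Real.sinh t / (2 * Real.sqrt (Real.cosh t))
      - F / Real.sqrt (Real.cosh t) : ℝ) : ℂ)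

/-- z₁(t) = (tanh t, 0, 0). -/
def z1h (t : ℝ) : C3 := (((Real.tanh t : ℝ) : ℂ), 0, 0)

/-- z₂(t) = (0, sech t, 0). -/
def z2h (t : ℝ) : C3 := (0, (((Real.cosh t)⁻¹ : ℝ) : ℂ), 0)

/-- z₃(t) = (0, 0, sech t). -/
def z3h (t : ℝ) : C3 := (0, 0, (((Real.cosh t)⁻¹ : ℝ) : ℂ))

lemma fInt_zero : fInt 0 = 0 := intervalIntegral.integral_same

lemma omega3_z1h (t : ℝ) (w : C3) : omega3 (z1h t) w = Real.tanh t * w.1.im := by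
  simp only [omega3, z1h, Complex.mul_im, Complex.conj_ofReal, map_zero, zero_mul,
    Complex.zero_im, Complex.ofReal_re, Complex.ofReal_im]
  ring

lemma omega3_z2h (t : ℝ) (w : C3) : omega3 (z2h t) w = (Real.cosh t)⁻¹ * w.2.1.im := by
  simp only [omega3, z2h, Complex.mul_im, Complex.conj_ofReal, map_zero, zero_mul,
    Complex.zero_im, Complex.ofReal_re, Complex.ofReal_im]
  ring

lemma omega3_z3h (t : ℝ) (w : C3) : omega3 (z3h t) w = (Real.cosh t)⁻¹ * w.2.2.im := by
  simp only [omega3, z3h, Complex.mul_im, Complex.conj_ofReal, map_zero, zero_mul,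
    Complex.zero_im, Complex.ofReal_re, Complex.ofReal_im]
  ring

lemma omega3_frame (t : ℝ) :
    omega3 (z2h t) (z3h t) = 0 ∧ omega3 (z1h t) (z3h t) = 0 ∧ omega3 (z1h t) (z2h t) = 0 := by
  simp only [omega3_z1h, omega3_z2h]
  simp [z2h, z3h]

lemma sol1_im_zero (a b d e : ℝ) : (sol1 a b d e 0).im = e := by
  simp [sol1, fInt_zero]

lemma sol2_im_zero (a b c d e f : ℝ) : (sol2 a b c d e f 0).im = d + f := by
  simp [sol2, fInt_zero]

lemma sol3_im_zero (a b c d e f : ℝ) : (sol3 a b c d e f 0).im = d - f := by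
  simp [sol3, fInt_zero]

lemma tanh_mul_sol1_im (a b c e f t : ℝ) :
    Real.tanh t * (sol1 a b 0 e t).im
      = (Real.cosh t)⁻¹ * ((sol2 a b c 0 e f t).im + (sol3 a b c 0 e f t).im) := by
  simp only [sol1, sol2, sol3, Complex.add_im, Complex.ofReal_im, Complex.mul_im,
    Complex.I_re, Complex.I_im, Complex.ofReal_re, Real.tanh_eq_sinh_div_cosh]
  rw [← Real.sq_sqrt (Real.cosh_pos t).le]
  field_simp
  ring

lemma omega3_sol_of_D_eq_zero (A B C E F A' B' C' E' F' t : ℝ) :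
    omega3 (sol1 A B 0 E t, sol2 A B C 0 E F t, sol3 A' B' C' 0 E' F' t)
      (sol1 A' B' 0 E' t, -sol2 A' B' C' 0 E' F' t, sol3 A B C 0 E F t)
      = 2 * (B' * E + C' * F - B * E' - C * F') := by
  simp only [omega3, sol1, sol2, sol3, Complex.add_im, Complex.add_re, Complex.ofReal_im,
    Complex.ofReal_re, Complex.mul_im, Complex.mul_re, Complex.I_re, Complex.I_im,
    Complex.neg_im, Complex.neg_re, Real.tanh_eq_sinh_div_cosh, map_add, map_mul, Complex.conj_ofReal, Complex.conj_I]
  rw [← Real.sq_sqrt (Real.cosh_pos t).le]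
  field_simp
  ring

theorem statement_13
    (A B C D E F A' B' C' D' E' F' : ℝ) :
    (∀ t : ℝ,
      omega3 (z2h t) (z3h t) = 0 ∧
      omega3 (z1h t) (z3h t) = 0 ∧
      omega3 (z1h t) (z2h t) = 0 ∧
      omega3 (z1h t) (sol1 A' B' D' E' t, -sol2 A' B' C' D' E' F' t, sol3 A B C D E F t)
        + omega3 (z2h t) (sol1 A' B' D' E' t, -sol2 A' B' C' D' E' F' t, sol3 A B C D E F t)
        - omega3 (z3h t) (sol1 A B D E t, sol2 A B C D E F t, sol3 A' B' C' D' E' F' t) = 0 ∧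
      -omega3 (z1h t) (sol1 A B D E t, sol2 A B C D E F t, sol3 A' B' C' D' E' F' t)
        + omega3 (z2h t) (sol1 A B D E t, sol2 A B C D E F t, sol3 A' B' C' D' E' F' t)
        + omega3 (z3h t) (sol1 A' B' D' E' t, -sol2 A' B' C' D' E' F' t, sol3 A B C D E F t) = 0 ∧
      omega3 (sol1 A B D E t, sol2 A B C D E F t, sol3 A' B' C' D' E' F' t)
        (sol1 A' B' D' E' t, -sol2 A' B' C' D' E' F' t, sol3 A B C D E F t) = 0)
    ↔
    (D = 0 ∧ D' = 0 ∧ A * D' + B * E' + C * F' = A' * D + B' * E + C' * F) := by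
  constructor
  · intro h
    obtain ⟨-, -, -, h₁, h₂, h₃⟩ := h 0
    simp only [omega3_z1h, omega3_z2h, omega3_z3h, Complex.neg_im, sol1_im_zero, sol2_im_zero,
      sol3_im_zero, Real.tanh_zero, Real.cosh_zero, inv_one] at h₁ h₂
    obtain rfl : D' = 0 := by linarith
    obtain rfl : D = 0 := by linarith
    rw [omega3_sol_of_D_eq_zero] at h₃
    exact ⟨rfl, rfl, by linarith⟩
  · rintro ⟨rfl, rfl, hrel⟩ t
    have h₁ := tanh_mul_sol1_im A' B' C' E' F' t
    have h₂ := tanh_mul_sol1_im A B C E F t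
    refine ⟨(omega3_frame t).1, (omega3_frame t).2.1, (omega3_frame t).2.2, ?_⟩
    simp only [omega3_z1h, omega3_z2h, omega3_z3h, Complex.neg_im, omega3_sol_of_D_eq_zero]
    exact ⟨by linarith, by linarith, by linarith⟩
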